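/- Suppose x^k ∈ ℝ^{n×p} satisfies x^{k+1} = Wx^k − α_k g^k where ‖W^j − (1/n)11^T‖ ≤ Cζ^j with 0 ≤ ζ < 1, ‖g^k‖ ≤ B for all k, and α_k = 1/(L(k+1)^ε) with ε ∈ (0,1], L > 0. Then with x̄^k = (1/n)11^T x^k, ‖x^k − x̄^k‖ ≤ C(‖x^0‖ζ^k + B Σ_{j=0}^{k-1} α_j ζ^{k-1-j}), and consequently ‖x^k − x̄^k‖ → 0 at rate O(1/(k+1)^ε), i.e., limsup_k (k+1)^ε ‖x^k − x̄^k‖ < ∞. -/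

import Mathlib

/-!
Since `‖W ^ j - J‖ ≤ C ζ ^ j → 0`, the powers of `W` converge to the averaging matrix `J`, and
passing to the limit in `W ^ (j + i) = W ^ j * W ^ i` gives `J * W ^ i = J`. Unrolling the
recursion and applying `1 - J` then yields
`x k - J * x k = (W ^ k - J) * x 0 - ∑ j < k, α j • (W ^ (k - 1 - j) - J) * g j`,
whence the first bound. For the rate, `ε ≤ 1` gives
`((k + 1) / (j + 1)) ^ ε ≤ (k + 1) / (j + 1) ≤ k - j + 1`, so `(k + 1) ^ ε` times the
convolution `∑ j < k, α j * ζ ^ (k - 1 - j)` is dominated by `L⁻¹ * ∑' i, (i + 2) * ζ ^ i`.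
-/

/-- The Frobenius norm of a real matrix. -/
noncomputable def frob {m p : Type*} [Fintype m] [Fintype p] (A : Matrix m p ℝ) : ℝ :=
  Real.sqrt (∑ i, ∑ j, (A i j) ^ 2)

open Filter Topology Finset

theorem mul_pow_eq_of_tendsto_pow {R : Type*} [Monoid R] [TopologicalSpace R] [ContinuousMul R]
    [T2Space R] {A P : R} (h : Tendsto (A ^ ·) atTop (𝓝 P)) (m : ℕ) : P * A ^ m = P := by
  refine tendsto_nhds_unique ?_ ((tendsto_add_atTop_iff_nat m).mpr h)
  simpa only [pow_add] using h.mul_const (A ^ m)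

section Unrolling

variable {m p R : Type*} [Fintype m] [DecidableEq m] [Ring R]
  {W : Matrix m m R} {x u : ℕ → Matrix m p R}

theorem eq_pow_mul_sub_sum_of_rec (hrec : ∀ k, x (k + 1) = W * x k - u k) (k : ℕ) :
    x k = W ^ k * x 0 - ∑ j ∈ range k, W ^ (k - 1 - j) * u j := by
  induction k with
  | zero => simp
  | succ k ih =>
    have hshift : ∀ j ∈ range k, W * (W ^ (k - 1 - j) * u j) = W ^ (k - j) * u j := by
      intro j hj
      rw [← Matrix.mul_assoc, ← pow_succ']
      congr 2
      have := mem_range.mp hj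
      omega
    rw [hrec, ih, Matrix.mul_sub, Matrix.mul_sum, sum_congr rfl hshift, ← Matrix.mul_assoc,
      ← pow_succ', sum_range_succ]
    simp [sub_sub]

theorem sub_mul_self_eq_of_rec {J : Matrix m m R} (hJW : ∀ i, J * W ^ i = J)
    (hrec : ∀ k, x (k + 1) = W * x k - u k) (k : ℕ) :
    x k - J * x k = (W ^ k - J) * x 0 - ∑ j ∈ range k, (W ^ (k - 1 - j) - J) * u j := by
  have hproj : ∀ i (A : Matrix m p R), (1 - J) * (W ^ i * A) = (W ^ i - J) * A := by
    intro i A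
    rw [← Matrix.mul_assoc, Matrix.sub_mul, Matrix.one_mul, hJW]
  have hsplit : x k - J * x k = (1 - J) * x k := by rw [Matrix.sub_mul, Matrix.one_mul]
  rw [hsplit, eq_pow_mul_sub_sum_of_rec hrec k, Matrix.mul_sub, Matrix.mul_sum, hproj]
  simp only [hproj]

end Unrolling

section Frobenius

attribute [local instance] Matrix.frobeniusSeminormedAddCommGroup Matrix.frobeniusNormSMulClass

variable {m p : Type*} [Fintype m] [Fintype p]

theorem frob_eq_norm (A : Matrix m p ℝ) : frob A = ‖A‖ := by
  simp [frob, Matrix.frobenius_norm_def, Real.sqrt_eq_rpow]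

theorem tendsto_of_frob_sub_le {ι : Type*} {l : Filter ι} {A : ι → Matrix m p ℝ}
    {P : Matrix m p ℝ} {b : ι → ℝ} (hb : Tendsto b l (𝓝 0)) (h : ∀ i, frob (A i - P) ≤ b i) :
    Tendsto A l (𝓝 P) :=
  tendsto_iff_norm_sub_tendsto_zero.mpr
    (squeeze_zero (fun _ => norm_nonneg _) (fun i => frob_eq_norm (A i - P) ▸ h i) hb)

theorem frob_sub_mul_self_le_of_rec [DecidableEq m] {W J : Matrix m m ℝ} {C ζ B : ℝ}
    {α : ℕ → ℝ} {x g : ℕ → Matrix m p ℝ} (hJW : ∀ i, J * W ^ i = J)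
    (hW : ∀ i, frob (W ^ i - J) ≤ C * ζ ^ i) (hα : ∀ k, 0 ≤ α k) (hg : ∀ k, frob (g k) ≤ B)
    (hrec : ∀ k, x (k + 1) = W * x k - α k • g k) (k : ℕ) :
    frob (x k - J * x k)
      ≤ C * (frob (x 0) * ζ ^ k + B * ∑ j ∈ range k, α j * ζ ^ (k - 1 - j)) := by
  rw [sub_mul_self_eq_of_rec hJW hrec k]
  simp only [frob_eq_norm, Matrix.mul_smul] at hW hg ⊢
  have hmul : ∀ i {A : Matrix m p ℝ} {b : ℝ}, ‖A‖ ≤ b → ‖(W ^ i - J) * A‖ ≤ C * ζ ^ i * b :=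
    fun i A b hA => (Matrix.frobenius_norm_mul _ _).trans
      (mul_le_mul (hW i) hA (norm_nonneg _) ((norm_nonneg _).trans (hW i)))
  calc _ ≤ ‖(W ^ k - J) * x 0‖ + ∑ j ∈ range k, ‖α j • ((W ^ (k - 1 - j) - J) * g j)‖ :=
        (norm_sub_le _ _).trans (add_le_add_right (norm_sum_le _ _) _)
    _ ≤ C * ζ ^ k * ‖x 0‖ + ∑ j ∈ range k, α j * (C * ζ ^ (k - 1 - j) * B) := by
        refine add_le_add (hmul k le_rfl) (sum_le_sum fun j _ => ?_)
        rw [norm_smul, Real.norm_of_nonneg (hα j)]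
        exact mul_le_mul_of_nonneg_left (hmul _ (hg j)) (hα j)
    _ = _ := by
        rw [mul_add, mul_sum, mul_sum]
        exact congrArg₂ _ (by ring) (sum_congr rfl fun j _ => by ring)

end Frobenius

section Rate

variable {ζ ε : ℝ}

theorem rpow_le_div_mul_rpow {a c : ℝ} (ha : 0 < a) (hac : a ≤ c) (hε : ε ≤ 1) :
    c ^ ε ≤ c / a * a ^ ε := by
  have hca : 1 ≤ c / a := (one_le_div ha).mpr hac
  calc c ^ ε = (c / a) ^ ε * a ^ ε := by
        rw [← Real.mul_rpow (by positivity) ha.le, div_mul_cancel₀ _ ha.ne']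
    _ ≤ c / a * a ^ ε := by
        gcongr
        simpa using Real.rpow_le_rpow_of_exponent_le hca hε

theorem summable_nat_add_two_mul_pow (hζ0 : 0 ≤ ζ) (hζ1 : ζ < 1) :
    Summable fun i : ℕ => ((i : ℝ) + 2) * ζ ^ i := by
  have hlin := summable_pow_mul_geometric_of_norm_lt_one 1
    (by rwa [Real.norm_of_nonneg hζ0] : ‖ζ‖ < 1)
  have hgeom := summable_geometric_of_lt_one hζ0 hζ1
  exact (hlin.add (hgeom.mul_left 2)).congr fun i => by ring

theorem nat_add_one_rpow_mul_pow_le (hζ0 : 0 ≤ ζ) (hζ1 : ζ < 1) (hε : ε ≤ 1) (k : ℕ) :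
    ((k : ℝ) + 1) ^ ε * ζ ^ k ≤ ∑' i : ℕ, ((i : ℝ) + 2) * ζ ^ i := by
  have hk : 1 ≤ (k : ℝ) + 1 := by simp
  calc ((k : ℝ) + 1) ^ ε * ζ ^ k ≤ ((k : ℝ) + 2) * ζ ^ k := by
        gcongr
        calc ((k : ℝ) + 1) ^ ε ≤ (k : ℝ) + 1 := by
              simpa using Real.rpow_le_rpow_of_exponent_le hk hε
          _ ≤ (k : ℝ) + 2 := by linarith
    _ ≤ _ := (summable_nat_add_two_mul_pow hζ0 hζ1).le_tsum k fun i _ => by positivity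

theorem nat_add_one_rpow_mul_sum_pow_div_le (hζ0 : 0 ≤ ζ) (hζ1 : ζ < 1) (hε : ε ≤ 1) (k : ℕ) :
    ((k : ℝ) + 1) ^ ε * ∑ j ∈ range k, ζ ^ (k - 1 - j) / ((j : ℝ) + 1) ^ ε
      ≤ ∑' i : ℕ, ((i : ℝ) + 2) * ζ ^ i := by
  have hterm : ∀ j ∈ range k, ((k : ℝ) + 1) ^ ε * (ζ ^ (k - 1 - j) / ((j : ℝ) + 1) ^ ε)
      ≤ (((k - 1 - j : ℕ) : ℝ) + 2) * ζ ^ (k - 1 - j) := by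
    intro j hj
    have hjk : j + 1 ≤ k := mem_range.mp hj
    have hcast : ((k - 1 - j : ℕ) : ℝ) + 2 = (k : ℝ) - j + 1 := by
      rw [show k - 1 - j = k - (j + 1) by omega, Nat.cast_sub hjk]; push_cast; ring
    have hj : (0 : ℝ) < (j : ℝ) + 1 := by positivity
    have hjk' : (j : ℝ) + 1 ≤ k := by exact_mod_cast hjk
    have hratio : ((k : ℝ) + 1) / ((j : ℝ) + 1) ≤ (k : ℝ) - j + 1 := by
      rw [div_le_iff₀ hj]; nlinarith
    calc ((k : ℝ) + 1) ^ ε * (ζ ^ (k - 1 - j) / ((j : ℝ) + 1) ^ ε)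
        ≤ ((k : ℝ) + 1) / ((j : ℝ) + 1) * ((j : ℝ) + 1) ^ ε
            * (ζ ^ (k - 1 - j) / ((j : ℝ) + 1) ^ ε) := by
          gcongr
          exact rpow_le_div_mul_rpow hj (by linarith) hε
      _ = ((k : ℝ) + 1) / ((j : ℝ) + 1) * ζ ^ (k - 1 - j) := by
          field_simp
      _ ≤ _ := by rw [hcast]; gcongr
  calc _ ≤ ∑ j ∈ range k, (((k - 1 - j : ℕ) : ℝ) + 2) * ζ ^ (k - 1 - j) := by
        rw [mul_sum]; exact sum_le_sum hterm
    _ = ∑ i ∈ range k, ((i : ℝ) + 2) * ζ ^ i :=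
        sum_range_reflect (fun i => ((i : ℝ) + 2) * ζ ^ i) k
    _ ≤ _ := (summable_nat_add_two_mul_pow hζ0 hζ1).sum_le_tsum _ fun i _ => by positivity

end Rate

theorem stmt10_general {n p : ℕ} (W : Matrix (Fin n) (Fin n) ℝ)
    (C ζ B L ε : ℝ) (hC : 0 < C) (hζ0 : 0 ≤ ζ) (hζ1 : ζ < 1) (hB : 0 ≤ B)
    (hL : 0 < L) (hε1 : ε ≤ 1)
    (α : ℕ → ℝ) (hα : ∀ k : ℕ, α k = 1 / (L * ((k : ℝ) + 1) ^ ε))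
    (hWk : ∀ j : ℕ,
      frob (W ^ j - Matrix.of fun _ _ : Fin n => (1 : ℝ) / n) ≤ C * ζ ^ j)
    (x g : ℕ → Matrix (Fin n) (Fin p) ℝ)
    (hg : ∀ k, frob (g k) ≤ B)
    (hrec : ∀ k, x (k + 1) = W * x k - α k • g k) :
    (∀ k : ℕ,
      frob (x k - (Matrix.of fun _ _ : Fin n => (1 : ℝ) / n) * x k)
        ≤ C * (frob (x 0) * ζ ^ k + B * ∑ j ∈ Finset.range k, α j * ζ ^ (k - 1 - j))) ∧
    (∃ M : ℝ, ∀ k : ℕ,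
      ((k : ℝ) + 1) ^ ε *
        frob (x k - (Matrix.of fun _ _ : Fin n => (1 : ℝ) / n) * x k) ≤ M) := by
  set J : Matrix (Fin n) (Fin n) ℝ := Matrix.of fun _ _ : Fin n => (1 : ℝ) / n
  have hJW : ∀ i, J * W ^ i = J := mul_pow_eq_of_tendsto_pow <| tendsto_of_frob_sub_le
    (by simpa using (tendsto_pow_atTop_nhds_zero_of_lt_one hζ0 hζ1).const_mul C) hWk
  have hα0 : ∀ k, 0 ≤ α k := fun k => by rw [hα k]; positivity
  have hbound := frob_sub_mul_self_le_of_rec hJW hWk hα0 hg hrec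
  have hsum : ∀ k, ∑ j ∈ range k, α j * ζ ^ (k - 1 - j)
      = L⁻¹ * ∑ j ∈ range k, ζ ^ (k - 1 - j) / ((j : ℝ) + 1) ^ ε := fun k => by
    rw [mul_sum]; exact sum_congr rfl fun j _ => by rw [hα j]; field_simp
  set D := ∑' i : ℕ, ((i : ℝ) + 2) * ζ ^ i
  refine ⟨hbound, C * (frob (x 0) * D + B * (L⁻¹ * D)), fun k => ?_⟩
  calc ((k : ℝ) + 1) ^ ε * frob (x k - J * x k)
      ≤ ((k : ℝ) + 1) ^ ε *
          (C * (frob (x 0) * ζ ^ k + B * ∑ j ∈ range k, α j * ζ ^ (k - 1 - j))) :=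
        mul_le_mul_of_nonneg_left (hbound k) (by positivity)
    _ = C * (frob (x 0) * (((k : ℝ) + 1) ^ ε * ζ ^ k) + B * (L⁻¹ *
          (((k : ℝ) + 1) ^ ε * ∑ j ∈ range k, ζ ^ (k - 1 - j) / ((j : ℝ) + 1) ^ ε))) := by
        rw [hsum]; ring
    _ ≤ C * (frob (x 0) * D + B * (L⁻¹ * D)) := by
        gcongr
        · exact Real.sqrt_nonneg _
        · exact nat_add_one_rpow_mul_pow_le hζ0 hζ1 hε1 k
        · exact nat_add_one_rpow_mul_sum_pow_div_le hζ0 hζ1 hε1 k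

theorem stmt10 {n p : ℕ} (hn : 0 < n) (W : Matrix (Fin n) (Fin n) ℝ)
    (C ζ B L ε : ℝ) (hC : 0 < C) (hζ0 : 0 ≤ ζ) (hζ1 : ζ < 1) (hB : 0 ≤ B)
    (hL : 0 < L) (hε : 0 < ε) (hε1 : ε ≤ 1)
    (α : ℕ → ℝ) (hα : ∀ k : ℕ, α k = 1 / (L * ((k : ℝ) + 1) ^ ε))
    (hWk : ∀ j : ℕ,
      frob (W ^ j - Matrix.of fun _ _ : Fin n => (1 : ℝ) / n) ≤ C * ζ ^ j)
    (x g : ℕ → Matrix (Fin n) (Fin p) ℝ)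
    (hg : ∀ k, frob (g k) ≤ B)
    (hrec : ∀ k, x (k + 1) = W * x k - α k • g k) :
    (∀ k : ℕ,
      frob (x k - (Matrix.of fun _ _ : Fin n => (1 : ℝ) / n) * x k)
        ≤ C * (frob (x 0) * ζ ^ k + B * ∑ j ∈ Finset.range k, α j * ζ ^ (k - 1 - j))) ∧
    (∃ M : ℝ, ∀ k : ℕ,
      ((k : ℝ) + 1) ^ ε *
        frob (x k - (Matrix.of fun _ _ : Fin n => (1 : ℝ) / n) * x k) ≤ M) :=
  stmt10_general W C ζ B L ε hC hζ0 hζ1 hB hL hε1 α hα hWk x g hg hrec
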